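/- arXiv:1005.0584 — 2 statements merged into one kernel-verified Lean document; each statement's English description precedes it below -/
import Mathlib

section
/- On an n-dimensional inner product space, the full contraction of the p-th power of the metric double form satisfies c_g^p(g^p) = n!p!/(n-p)!, for 0 ≤ p ≤ n. -/
open scoped RealInnerProductSpace BigOperators

/-- Double forms of bidegree `(p,q)` on `V`, modelled as real-valued maps on
`p`-tuples tensor `q`-tuples of vectors (to be evaluated on alternating arguments). -/
abbrev DoubleForm (V : Type*) (p q : ℕ) := (Fin p → V) → (Fin q → V) → ℝ

/-- The metric (inner product) as a `(1,1)` double form. -/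
noncomputable def gForm (V : Type*) [NormedAddCommGroup V] [InnerProductSpace ℝ V] :
    DoubleForm V 1 1 := fun v w => (inner ℝ (v 0) (w 0) : ℝ)

/-- The product of double forms in the bigraded algebra `Ω(V)`, given by the
standard (normalized) shuffle/permutation sum in each slot. -/
noncomputable def dfMul {V : Type*} {p q r s : ℕ}
    (ω : DoubleForm V p q) (η : DoubleForm V r s) : DoubleForm V (p + r) (q + s) :=
  fun v w =>
    (1 / ((p.factorial * r.factorial * q.factorial * s.factorial : ℕ) : ℝ)) *
      ∑ σ : Equiv.Perm (Fin (p + r)), ∑ τ : Equiv.Perm (Fin (q + s)),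
        ((Equiv.Perm.sign σ : ℤ) : ℝ) * ((Equiv.Perm.sign τ : ℤ) : ℝ) *
          (ω (fun i => v (σ (Fin.castAdd r i))) (fun j => w (τ (Fin.castAdd s j))) *
            η (fun i => v (σ (Fin.natAdd p i))) (fun j => w (τ (Fin.natAdd q j))))

/-- The contraction operator `c_g`, summing insertions of an orthonormal basis
vector into both slots. -/
noncomputable def dfContr {V : Type*} [NormedAddCommGroup V] [InnerProductSpace ℝ V]
    [FiniteDimensional ℝ V] {p q : ℕ} (ω : DoubleForm V (p + 1) (q + 1)) : DoubleForm V p q :=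
  fun v w => ∑ i, ω (Fin.cons (stdOrthonormalBasis ℝ V i) v)
      (Fin.cons (stdOrthonormalBasis ℝ V i) w)

/-- Powers `g^p` of the metric in the algebra of double forms. -/
noncomputable def gpow (V : Type*) [NormedAddCommGroup V] [InnerProductSpace ℝ V] :
    (p : ℕ) → DoubleForm V p p
  | 0 => fun _ _ => 1
  | p + 1 => dfMul (gpow V p) (gForm V)

/-- Powers `R^k` of a `(2,2)` double form. -/
noncomputable def dfPow {V : Type*} (R : DoubleForm V 2 2) :
    (k : ℕ) → DoubleForm V (2 * k) (2 * k)
  | 0 => fun _ _ => 1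
  | k + 1 => dfMul (dfPow R k) R

/-- Full contraction `c_g^m` of an `(m,m)` double form, as a scalar. -/
noncomputable def dfFullContr {V : Type*} [NormedAddCommGroup V] [InnerProductSpace ℝ V]
    [FiniteDimensional ℝ V] : (m : ℕ) → DoubleForm V m m → ℝ
  | 0, ω => ω (fun i => i.elim0) (fun i => i.elim0)
  | m + 1, ω => dfFullContr m (dfContr ω)

/-- Contraction `c_g^m` of an `(m+1,m+1)` double form down to a `(1,1)` form. -/
noncomputable def dfContrToOne {V : Type*} [NormedAddCommGroup V] [InnerProductSpace ℝ V]
    [FiniteDimensional ℝ V] : (m : ℕ) → DoubleForm V (m + 1) (m + 1) → DoubleForm V 1 1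
  | 0, ω => ω
  | m + 1, ω => dfContrToOne m (dfContr ω)

/-!
By induction on `p`, `g^p (v, w) = p! · det ⟨v i, w j⟩`: in the product `g^p · g`, expanding the
determinant of the `p × p` minor produces a sum over `S_p` that is absorbed into the outer sum
over `S_{p+1}` (via the embedding `S_p ↪ S_{p+1}` fixing the last point), and what remains is the
double signed sum `∑ σ τ, sgn σ sgn τ ∏ M (σ i) (τ i) = (p+1)! det M`.
The full contraction evaluates `g^p` on all `p`-tuples of an orthonormal basis, where the Gram
determinant is `1` on injective tuples and `0` otherwise; there are `n!/(n-p)!` injective tuples.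
-/

open Finset Equiv Equiv.Perm Matrix

section SignedPermutationSums

variable {R : Type*} [CommRing R]

theorem Matrix.sum_perm_sum_perm_sign_mul_sign_mul_prod {n : Type*} [DecidableEq n] [Fintype n]
    (M : Matrix n n R) :
    ∑ σ : Perm n, ∑ τ : Perm n, ((sign σ : ℤ) : R) * ((sign τ : ℤ) : R) * ∏ i, M (σ i) (τ i)
      = (Fintype.card n).factorial * M.det := by
  have h_row (σ : Perm n) :
      ∑ τ : Perm n, ((sign σ : ℤ) : R) * ((sign τ : ℤ) : R) * ∏ i, M (σ i) (τ i) = M.det := by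
    have h := det_permute σ M
    rw [← det_transpose, det_apply'] at h
    simp only [mul_assoc, ← Finset.mul_sum]
    change ((sign σ : ℤ) : R) * ∑ τ : Perm n, ((sign τ : ℤ) : R) * ∏ i, (M.submatrix σ id)ᵀ (τ i) i
      = M.det
    rw [h, ← mul_assoc, ← Int.cast_mul, ← Units.val_mul, Int.units_mul_self, Units.val_one,
      Int.cast_one, one_mul]
  rw [Finset.sum_congr rfl fun σ _ => h_row σ, Finset.sum_const, Finset.card_univ,
    Fintype.card_perm, nsmul_eq_mul]

theorem Equiv.Perm.sum_sum_sign_mul_sign_mul_viaFintypeEmbedding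
    {α β : Type*} [Fintype α] [DecidableEq α] [Fintype β] [DecidableEq β] (f : α ↪ β)
    (G : Perm β → R) :
    ∑ σ : Perm β, ∑ a : Perm α,
        ((sign σ : ℤ) : R) * ((sign a : ℤ) : R) * G (σ * a.viaFintypeEmbedding f)
      = (Fintype.card α).factorial * ∑ σ : Perm β, ((sign σ : ℤ) : R) * G σ := by
  rw [Finset.sum_comm]
  have h_shift (a : Perm α) :
      ∑ σ : Perm β, ((sign σ : ℤ) : R) * ((sign a : ℤ) : R) * G (σ * a.viaFintypeEmbedding f)
        = ∑ σ : Perm β, ((sign σ : ℤ) : R) * G σ := by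
    refine Fintype.sum_equiv (Equiv.mulRight (a.viaFintypeEmbedding f)) _ _ fun σ => ?_
    simp only [Equiv.coe_mulRight, sign_mul, viaFintypeEmbedding_sign, Units.val_mul, Int.cast_mul]
  rw [Finset.sum_congr rfl fun a _ => h_shift a, Finset.sum_const, Finset.card_univ,
    Fintype.card_perm, nsmul_eq_mul]

theorem Matrix.det_submatrix_castSucc_mul {p : ℕ} (M : Matrix (Fin (p + 1)) (Fin (p + 1)) R)
    (σ τ : Perm (Fin (p + 1))) :
    (M.submatrix (σ ∘ Fin.castSucc) (τ ∘ Fin.castSucc)).det * M (σ (Fin.last p)) (τ (Fin.last p))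
      = ∑ α : Perm (Fin p), ((sign α : ℤ) : R) *
          ∏ i, M ((σ * α.viaFintypeEmbedding Fin.castSuccEmb) i) (τ i) := by
  have h_last : Fin.last p ∉ Set.range Fin.castSuccEmb := by simp
  rw [det_apply', Finset.sum_mul]
  refine Finset.sum_congr rfl fun α _ => ?_
  simp only [Fin.prod_univ_castSucc, Perm.mul_apply, submatrix_apply, Function.comp_apply,
    viaFintypeEmbedding_apply_notMem_range _ _ h_last]
  simp only [← Fin.coe_castSuccEmb, viaFintypeEmbedding_apply_image]
  ring

theorem Matrix.sum_perm_sum_perm_det_submatrix_castSucc_mul {p : ℕ}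
    (M : Matrix (Fin (p + 1)) (Fin (p + 1)) R) :
    ∑ σ : Perm (Fin (p + 1)), ∑ τ : Perm (Fin (p + 1)), ((sign σ : ℤ) : R) * ((sign τ : ℤ) : R) *
        ((M.submatrix (σ ∘ Fin.castSucc) (τ ∘ Fin.castSucc)).det *
          M (σ (Fin.last p)) (τ (Fin.last p)))
      = p.factorial * (p + 1).factorial * M.det := by
  have h_col (τ : Perm (Fin (p + 1))) :
      ∑ σ : Perm (Fin (p + 1)), ((sign σ : ℤ) : R) * ((sign τ : ℤ) : R) *
          ((M.submatrix (σ ∘ Fin.castSucc) (τ ∘ Fin.castSucc)).det *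
            M (σ (Fin.last p)) (τ (Fin.last p)))
        = ((sign τ : ℤ) : R) * (p.factorial * ∑ σ : Perm (Fin (p + 1)),
            ((sign σ : ℤ) : R) * ∏ i, M (σ i) (τ i)) := by
    have h_absorb := sum_sum_sign_mul_sign_mul_viaFintypeEmbedding Fin.castSuccEmb
      (fun π => ∏ i, M (π i) (τ i))
    rw [Fintype.card_fin] at h_absorb
    rw [← h_absorb]
    simp only [det_submatrix_castSucc_mul, Finset.mul_sum]
    refine Finset.sum_congr rfl fun σ _ => Finset.sum_congr rfl fun α _ => ?_
    ring
  have h_det := sum_perm_sum_perm_sign_mul_sign_mul_prod M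
  rw [Fintype.card_fin] at h_det
  rw [Finset.sum_comm, Finset.sum_congr rfl fun τ _ => h_col τ, mul_assoc, ← h_det,
    Finset.sum_comm]
  simp only [Finset.mul_sum]
  refine Finset.sum_congr rfl fun τ _ => Finset.sum_congr rfl fun σ _ => ?_
  ring

end SignedPermutationSums

theorem dfMul_factorial_mul_det_pairing {V : Type*} (B : V → V → ℝ) (p : ℕ) :
    dfMul (fun v w : Fin p → V => (p.factorial : ℝ) * (Matrix.of fun i j => B (v i) (w j)).det)
        (fun v w : Fin 1 → V => B (v 0) (w 0))
      = fun v w => ((p + 1).factorial : ℝ) * (Matrix.of fun i j => B (v i) (w j)).det := by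
  funext v w
  have h_sum := sum_perm_sum_perm_det_submatrix_castSucc_mul (of fun i j => B (v i) (w j))
  simp only [submatrix, of_apply, Function.comp_apply, mul_assoc, ← Finset.mul_sum] at h_sum
  simp only [dfMul, Nat.factorial_one, mul_one, Nat.cast_mul, mul_assoc,
    mul_left_comm _ (p.factorial : ℝ), ← Finset.mul_sum,
    show ∀ i : Fin p, Fin.castAdd 1 i = i.castSucc from fun _ => rfl,
    show Fin.natAdd p (0 : Fin 1) = Fin.last p from rfl]
  rw [h_sum]
  field_simp

theorem gpow_eq_factorial_mul_det {V : Type*} [NormedAddCommGroup V] [InnerProductSpace ℝ V]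
    (p : ℕ) :
    gpow V p = fun v w => (p.factorial : ℝ) * (Matrix.of fun i j => inner ℝ (v i) (w j)).det := by
  induction p with
  | zero => funext v w; simp [gpow]
  | succ p ih => rw [gpow, ih]; exact dfMul_factorial_mul_det_pairing _ p

theorem dfFullContr_eq_sum {V : Type*} [NormedAddCommGroup V] [InnerProductSpace ℝ V]
    [FiniteDimensional ℝ V] (m : ℕ) (ω : DoubleForm V m m) :
    dfFullContr m ω = ∑ f : Fin m → Fin (Module.finrank ℝ V),
      ω (stdOrthonormalBasis ℝ V ∘ f) (stdOrthonormalBasis ℝ V ∘ f) := by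
  induction m with
  | zero =>
    rw [dfFullContr, Fintype.sum_unique]
    congr 1 <;> exact Subsingleton.elim _ _
  | succ m ih =>
    rw [dfFullContr, ih, ← (Fin.consEquiv fun _ => Fin (Module.finrank ℝ V)).sum_comp,
      Fintype.sum_prod_type, Finset.sum_comm]
    simp [dfContr, Fin.consEquiv, Fin.comp_cons]

open Classical in
theorem Orthonormal.det_inner_comp {V : Type*} [NormedAddCommGroup V] [InnerProductSpace ℝ V]
    {ι κ : Type*} [Fintype κ] [DecidableEq κ] {e : ι → V} (he : Orthonormal ℝ e) (f : κ → ι) :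
    (of fun i j => inner ℝ (e (f i)) (e (f j))).det = if Function.Injective f then 1 else 0 := by
  split_ifs with hf
  · have h_one : (of fun i j => inner ℝ (e (f i)) (e (f j)) : Matrix κ κ ℝ) = 1 := by
      ext i j
      simp only [of_apply, orthonormal_iff_ite.mp he, Matrix.one_apply, hf.eq_iff]
    rw [h_one, det_one]
  · obtain ⟨i, j, hij, hne⟩ := Function.not_injective_iff.mp hf
    exact det_zero_of_row_eq hne (funext fun k => by simp only [of_apply, hij])

open Classical in
theorem Fintype.card_filter_injective (α β : Type*) [Fintype α] [DecidableEq α] [Fintype β]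
    [DecidableEq β] :
    #{f : α → β | Function.Injective f} = (Fintype.card β).descFactorial (Fintype.card α) := by
  rw [← Fintype.card_subtype, Fintype.card_congr (Equiv.subtypeInjectiveEquivEmbedding α β),
    Fintype.card_embedding_eq]

/-- On an `n`-dimensional inner product space, the full contraction of the
`p`-th power of the metric double form satisfies `c_g^p (g^p) = n! p! / (n-p)!`, `0 ≤ p ≤ n`. -/
theorem full_contraction_metric_power
    {V : Type*} [NormedAddCommGroup V] [InnerProductSpace ℝ V] [FiniteDimensional ℝ V]
    (n p : ℕ) (hn : Module.finrank ℝ V = n) (hp : p ≤ n) :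
    dfFullContr p (gpow V p) = ((n.factorial : ℝ) * (p.factorial : ℝ)) / ((n - p).factorial : ℝ) := by
  subst hn
  simp only [dfFullContr_eq_sum, gpow_eq_factorial_mul_det, Function.comp_apply,
    (stdOrthonormalBasis ℝ V).orthonormal.det_inner_comp, mul_ite, mul_one, mul_zero]
  rw [Finset.sum_ite, Finset.sum_const_zero, add_zero, Finset.sum_const, nsmul_eq_mul,
    Fintype.card_filter_injective, Fintype.card_fin, Fintype.card_fin, eq_div_iff (by positivity),
    ← Nat.factorial_mul_descFactorial hp]
  push_cast
  ring
end

section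
/- On an n-dimensional inner product space, contraction of a power of the metric satisfies c_g(g^p) = p(n-p+1) g^{p-1} for 1 ≤ p ≤ n. -/
open scoped RealInnerProductSpace BigOperators

/-!
On vectors, `g^p (v, w) = p! · det (⟪v a, w b⟫)`: the shuffle sums defining `g^p · g`, after
reindexing by permutations fixing the last slot, reproduce the Leibniz expansion of the
`(p + 1) × (p + 1)` Gram determinant. Contracting inserts an orthonormal vector `e_i` in front
of both arguments. Expanding the bordered Gram determinant along its first row, the corner
entry `⟪e_i, e_i⟫ = 1` contributes `det` for each of the `n` basis vectors, while each of the
`j` other terms, summed over `i` with `∑ ⟪x, e_i⟫⟪e_i, y⟫ = ⟪x, y⟫`, becomes a determinant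
with one column moved to the front, i.e. `-det`. Hence
`c_g (g^(j+1)) = (j+1)! (n - j) det = (j+1)(n-j) g^j`.
-/

open Equiv Matrix Finset

theorem Equiv.Perm.cast_sign_mul_self {R n : Type*} [Ring R] [DecidableEq n] [Fintype n]
    (σ : Perm n) : (Perm.sign σ : R) * Perm.sign σ = 1 := by
  rw [← Int.cast_mul, ← Units.val_mul, Int.units_mul_self, Units.val_one, Int.cast_one]

def Fin.extendPermLast {p : ℕ} (π : Perm (Fin p)) : Perm (Fin (p + 1)) :=
  finSuccEquivLast.symm.permCongr π.optionCongr

@[simp]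
theorem Fin.extendPermLast_castSucc {p : ℕ} (π : Perm (Fin p)) (i : Fin p) :
    Fin.extendPermLast π (Fin.castSucc i) = Fin.castSucc (π i) := by
  simp [Fin.extendPermLast, Equiv.permCongr_apply]

@[simp]
theorem Fin.extendPermLast_last {p : ℕ} (π : Perm (Fin p)) :
    Fin.extendPermLast π (Fin.last p) = Fin.last p := by
  simp [Fin.extendPermLast, Equiv.permCongr_apply]

@[simp]
theorem Fin.sign_extendPermLast {p : ℕ} (π : Perm (Fin p)) :
    Perm.sign (Fin.extendPermLast π) = Perm.sign π := by
  simp [Fin.extendPermLast]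

namespace Matrix

variable {R : Type*} [CommRing R]

theorem det_eq_sum_sign_mul_prod {n : Type*} [DecidableEq n] [Fintype n] (B : Matrix n n R) :
    B.det = ∑ τ : Perm n, (Perm.sign τ : R) * ∏ k, B k (τ k) := by
  rw [← det_transpose, det_apply']
  rfl

theorem sum_perm_sign_mul_det_submatrix_castSucc_mul_last {p : ℕ}
    (A : Matrix (Fin (p + 1)) (Fin (p + 1)) R) :
    ∑ τ : Perm (Fin (p + 1)), (Perm.sign τ : R) *
      ((A.submatrix Fin.castSucc (τ ∘ Fin.castSucc)).det * A (Fin.last p) (τ (Fin.last p)))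
      = p.factorial * A.det := by
  have expand : ∀ τ : Perm (Fin (p + 1)),
      (A.submatrix Fin.castSucc (τ ∘ Fin.castSucc)).det * A (Fin.last p) (τ (Fin.last p))
        = ∑ π : Perm (Fin p), (Perm.sign π : R) *
            ∏ k, A (Fin.extendPermLast π k) (τ k) := by
    intro τ
    simp [det_apply', sum_mul, Fin.prod_univ_castSucc, mul_assoc]
  have perm_sum : ∀ π : Perm (Fin p), ∑ τ : Perm (Fin (p + 1)), (Perm.sign τ : R) *
      ∏ k, A (Fin.extendPermLast π k) (τ k) = Perm.sign π * A.det := by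
    intro π
    calc _ = (A.submatrix (Fin.extendPermLast π) id).det := (det_eq_sum_sign_mul_prod _).symm
      _ = _ := by rw [det_permute, Fin.sign_extendPermLast]
  calc _ = ∑ π : Perm (Fin p), (Perm.sign π : R) * ∑ τ : Perm (Fin (p + 1)),
        (Perm.sign τ : R) * ∏ k, A (Fin.extendPermLast π k) (τ k) := by
        simp_rw [expand, mul_sum]
        rw [sum_comm]
        exact sum_congr rfl fun _ _ => sum_congr rfl fun _ _ => by ring
    _ = _ := by
        simp [perm_sum, ← mul_assoc, Perm.cast_sign_mul_self, Fintype.card_perm]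

theorem sum_perm_sign_mul_sign_mul_det_submatrix_castSucc_mul_last {p : ℕ}
    (A : Matrix (Fin (p + 1)) (Fin (p + 1)) R) :
    ∑ σ : Perm (Fin (p + 1)), ∑ τ : Perm (Fin (p + 1)), (Perm.sign σ : R) * (Perm.sign τ : R) *
      ((A.submatrix (σ ∘ Fin.castSucc) (τ ∘ Fin.castSucc)).det *
        A (σ (Fin.last p)) (τ (Fin.last p))) = p.factorial * (p + 1).factorial * A.det := by
  have row_sum : ∀ σ : Perm (Fin (p + 1)), ∑ τ : Perm (Fin (p + 1)),
      (Perm.sign σ : R) * (Perm.sign τ : R) *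
        ((A.submatrix (σ ∘ Fin.castSucc) (τ ∘ Fin.castSucc)).det *
          A (σ (Fin.last p)) (τ (Fin.last p))) = p.factorial * A.det := by
    intro σ
    have h := sum_perm_sign_mul_det_submatrix_castSucc_mul_last (A.submatrix σ id)
    simp only [det_permute, submatrix_submatrix, submatrix_apply, id, Function.id_comp] at h
    calc _ = (Perm.sign σ : R) * (p.factorial * (Perm.sign σ * A.det)) := by
          rw [← h, mul_sum]
          exact sum_congr rfl fun τ _ => by ring
      _ = _ := by linear_combination (p.factorial * A.det) * Perm.cast_sign_mul_self (R := R) σ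
  simp [row_sum, Fintype.card_perm]
  ring

end Matrix

section CrossGram

variable {V : Type*} [NormedAddCommGroup V] [InnerProductSpace ℝ V]

def crossGram {ι κ : Type*} (v : ι → V) (w : κ → V) : Matrix ι κ ℝ :=
  Matrix.of fun a b => ⟪v a, w b⟫

@[simp]
theorem crossGram_apply {ι κ : Type*} (v : ι → V) (w : κ → V) (a : ι) (b : κ) :
    crossGram v w a b = ⟪v a, w b⟫ :=
  rfl

theorem gpow_apply (p : ℕ) (v w : Fin p → V) :
    gpow V p v w = p.factorial * (crossGram v w).det := by
  induction p with
  | zero => simp [gpow]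
  | succ p ih =>
    have summand : ∀ σ τ : Perm (Fin (p + 1)), (Perm.sign σ : ℝ) * (Perm.sign τ : ℝ) *
        (gpow V p (fun i => v (σ (Fin.castAdd 1 i))) (fun i => w (τ (Fin.castAdd 1 i))) *
            gForm V (fun i => v (σ (Fin.natAdd p i))) (fun i => w (τ (Fin.natAdd p i))))
          = p.factorial * ((Perm.sign σ : ℝ) * (Perm.sign τ : ℝ) *
            (((crossGram v w).submatrix (σ ∘ Fin.castSucc) (τ ∘ Fin.castSucc)).det *
              crossGram v w (σ (Fin.last p)) (τ (Fin.last p)))) := by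
      intro σ τ
      have first :
          crossGram (fun i => v (σ (Fin.castAdd 1 i))) (fun i => w (τ (Fin.castAdd 1 i)))
            = (crossGram v w).submatrix (σ ∘ Fin.castSucc) (τ ∘ Fin.castSucc) := rfl
      have last : gForm V (fun i => v (σ (Fin.natAdd p i))) (fun i => w (τ (Fin.natAdd p i)))
          = crossGram v w (σ (Fin.last p)) (τ (Fin.last p)) := rfl
      rw [ih, first, last]
      ring
    show dfMul (gpow V p) (gForm V) v w = _
    simp only [dfMul, summand, ← mul_sum]
    rw [Matrix.sum_perm_sign_mul_sign_mul_det_submatrix_castSucc_mul_last]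
    field_simp
    push_cast
    ring

end CrossGram

section Contraction

variable {V : Type*} [NormedAddCommGroup V] [InnerProductSpace ℝ V]
  {ι : Type*} [Fintype ι]

theorem det_crossGram_cons_removeNth {k : ℕ} (v w : Fin (k + 1) → V) (d : Fin (k + 1)) :
    (crossGram v (Fin.cons (w d) (d.removeNth w))).det
      = (-1) ^ (d : ℕ) * (crossGram v w).det := by
  have hperm : (Fin.cons (w d) (d.removeNth w) : Fin (k + 1) → V) = w ∘ d.cycleRange.symm := by
    funext c
    cases c using Fin.cases with
    | zero => simp [Fin.cycleRange_symm_zero]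
    | succ c => simp [Fin.cycleRange_symm_succ, Fin.removeNth]
  rw [hperm, show crossGram v (w ∘ d.cycleRange.symm)
    = (crossGram v w).submatrix id d.cycleRange.symm from rfl, det_permute']
  simp [Fin.sign_cycleRange]

theorem OrthonormalBasis.sum_inner_mul_det_crossGram_cons (b : OrthonormalBasis ι ℝ V) {k : ℕ}
    (v : Fin (k + 1) → V) (u : Fin k → V) (y : V) :
    ∑ i, ⟪b i, y⟫ * (crossGram v (Fin.cons (b i) u)).det = (crossGram v (Fin.cons y u)).det := by
  simp_rw [det_succ_column_zero, mul_sum]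
  rw [sum_comm]
  refine sum_congr rfl fun a _ => ?_
  have minor : ∀ x, (crossGram v (Fin.cons x u)).submatrix a.succAbove Fin.succ
      = crossGram (a.removeNth v) u := fun _ => rfl
  simp only [crossGram_apply, Fin.cons_zero, minor]
  rw [← b.sum_inner_mul_inner, mul_sum, sum_mul]
  exact sum_congr rfl fun i _ => by ring

theorem OrthonormalBasis.sum_det_crossGram_cons (b : OrthonormalBasis ι ℝ V) {j : ℕ}
    (v w : Fin j → V) :
    ∑ i, (crossGram (Fin.cons (b i) v) (Fin.cons (b i) w)).det
      = (Fintype.card ι - j : ℝ) * (crossGram v w).det := by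
  have minor : ∀ (x : V) (y : Fin (j + 1) → V) (c : Fin (j + 1)),
      (crossGram (Fin.cons x v) y).submatrix Fin.succ c.succAbove
        = crossGram v (y ∘ c.succAbove) := fun _ _ _ => rfl
  have diagonal :
      ∑ i, ⟪b i, b i⟫ * (crossGram v w).det = Fintype.card ι * (crossGram v w).det := by
    simp [b.orthonormal.1]
  have off_diagonal : ∀ d : Fin j, ∑ i, (-1) ^ (d.succ : ℕ) * ⟪b i, w d⟫ *
      (crossGram v (Fin.cons (b i) w ∘ d.succ.succAbove)).det = -(crossGram v w).det := by
    intro d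
    obtain ⟨k, rfl⟩ : ∃ k, j = k + 1 := ⟨j - 1, by have := d.pos; omega⟩
    simp_rw [Fin.cons_comp_succ_succAbove, mul_assoc, ← mul_sum,
      b.sum_inner_mul_det_crossGram_cons, det_crossGram_cons_removeNth, Fin.val_succ, ← mul_assoc,
      ← pow_add, Odd.neg_one_pow (n := (d : ℕ) + 1 + d) ⟨d, by ring⟩, neg_one_mul]
  simp_rw [det_succ_row_zero, minor]
  rw [sum_comm, Fin.sum_univ_succ]
  simp only [crossGram_apply, Fin.cons_zero, Fin.cons_succ, Fin.val_zero, pow_zero, one_mul,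
    Fin.succAbove_zero, Fin.cons_comp_succ]
  rw [diagonal, sum_congr rfl fun d _ => off_diagonal d]
  simp only [sum_neg_distrib, sum_const, card_univ, Fintype.card_fin, nsmul_eq_mul]
  ring

end Contraction

theorem contraction_metric_power_general
    {V : Type*} [NormedAddCommGroup V] [InnerProductSpace ℝ V] [FiniteDimensional ℝ V]
    (n j : ℕ) (hn : Module.finrank ℝ V = n) :
    dfContr (gpow V (j + 1)) = ((((j : ℝ) + 1) * ((n : ℝ) - (j : ℝ))) • gpow V j) := by
  funext v w
  calc dfContr (gpow V (j + 1)) v w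
      = (j + 1).factorial * ∑ i, (crossGram (Fin.cons (stdOrthonormalBasis ℝ V i) v)
          (Fin.cons (stdOrthonormalBasis ℝ V i) w)).det := by
        simp only [dfContr, gpow_apply, mul_sum]
    _ = (j + 1).factorial * ((n - j) * (crossGram v w).det) := by
        rw [OrthonormalBasis.sum_det_crossGram_cons, Fintype.card_fin, hn]
    _ = _ := by
        rw [Pi.smul_apply, Pi.smul_apply, smul_eq_mul, gpow_apply, Nat.factorial_succ]
        push_cast
        ring

/-- Contraction of a power of the metric: `c_g (g^p) = p (n - p + 1) g^{p-1}`
for `1 ≤ p ≤ n`.  (Here `p = j+1` ranges over all `p ≥ 1`, so `p(n-p+1) = (j+1)(n-j)`.) -/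
theorem contraction_metric_power
    {V : Type*} [NormedAddCommGroup V] [InnerProductSpace ℝ V] [FiniteDimensional ℝ V]
    (n j : ℕ) (hn : Module.finrank ℝ V = n) (hp : j + 1 ≤ n) :
    dfContr (gpow V (j + 1)) = ((((j : ℝ) + 1) * ((n : ℝ) - (j : ℝ))) • gpow V j) :=
  contraction_metric_power_general n j hn
end
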